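/- Fix an integer n ≥ 1 and reals R > 0 and D with 0 < D < R², and define δ(r) = (r² + R² − D)/(2rR) for r > 0. Then for every r in the open interval (R − √D, R + √D) one has δ(r) ∈ (0,1), and sup_{r ∈ (R−√D, R+√D)} h_{n/2}(δ(r)) = h_{n/2}(√(1 − D/R²)), the supremum being attained at r = √(R² − D), where δ(√(R² − D)) = √(1 − D/R²). -/

import Mathlib

open MeasureTheory Real Filter Set
open scoped ENNReal NNReal Topology

noncomputable section

/-- The modified Bessel function of the first kind `I_ν(t)`. -/
def besselI (ν t : ℝ) : ℝ :=
  ∑' m : ℕ, (t / 2) ^ (2 * (m : ℝ) + ν) / ((m.factorial : ℝ) * Real.Gamma ((m : ℝ) + ν + 1))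

/-- The ratio `f_ν(t) = I_ν(t) / I_{ν-1}(t)`. -/
def besselRatio (ν t : ℝ) : ℝ := besselI ν t / besselI (ν - 1) t

/-- The inverse `f_ν⁻¹ : (0,1) → (0,∞)` of the strictly increasing bijection
`f_ν : (0,∞) → (0,1)`. -/
def besselRatioInv (ν y : ℝ) : ℝ := Function.invFunOn (besselRatio ν) (Set.Ioi 0) y

/-- The function `ξ_ν(t) = -t f_ν(t) + log((2π)^ν I_{ν-1}(t) / t^{ν-1})`. -/
def xiFun (ν t : ℝ) : ℝ :=
  -t * besselRatio ν t + Real.log ((2 * π) ^ ν * besselI (ν - 1) t / t ^ (ν - 1))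

/-- The function `h_ν(t) = ξ_ν(f_ν⁻¹(t))`, for `t ∈ (0,1)`. -/
def hFun (ν t : ℝ) : ℝ := xiFun ν (besselRatioInv ν t)

/-- Surface area of the unit `(n-1)`-sphere in `ℝⁿ`: `S_{n-1} = 2 π^{n/2} / Γ(n/2)`. -/
def surfaceArea (n : ℕ) : ℝ := 2 * π ^ ((n : ℝ) / 2) / Real.Gamma ((n : ℝ) / 2)

/-- `n`-dimensional Euclidean space. -/
abbrev EucSp (n : ℕ) := EuclideanSpace ℝ (Fin n)

/-- The uniform (normalized rotation-invariant) probability distribution on the sphere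
`S^{n-1}(R) = {x ∈ ℝⁿ : ‖x‖ = R}`; for `R = 0` it is the point mass at the origin. -/
def sphereUniform (n : ℕ) (R : ℝ) : Measure (EucSp n) :=
  ((volume : Measure (EucSp n)).toSphere Set.univ)⁻¹ •
    Measure.map (fun x : Metric.sphere (0 : EucSp n) 1 => R • (x : EucSp n))
      (volume : Measure (EucSp n)).toSphere

/-- Kullback-Leibler divergence `KL(μ‖ν)`, with value `∞` unless `μ ≪ ν` and the
log-likelihood ratio is `μ`-integrable. -/
def klDiv {Ω : Type*} [MeasurableSpace Ω] (μ ν : Measure Ω) : ℝ≥0∞ :=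
  open scoped Classical in
  if μ ≪ ν ∧ Integrable (llr μ ν) μ then ENNReal.ofReal (∫ x, llr μ ν x ∂μ) else ⊤

/-- The rate-distortion function `R_n(D;R)` of the uniform distribution on `S^{n-1}(R)`
under squared error distortion: the infimum of the mutual information `I(X̂;X)` over all
joint laws `π` of pairs `(X̂, X)` of `ℝⁿ`-valued random vectors such that `X ∼ μ_R` and
`E[‖X̂ - X‖²] ≤ D`. -/
def rateDistortion (n : ℕ) (D R : ℝ) : ℝ≥0∞ :=
  ⨅ (P : Measure (EucSp n × EucSp n)) (_ : IsProbabilityMeasure P)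
    (_ : Measure.map Prod.snd P = sphereUniform n R)
    (_ : ∫⁻ y, ENNReal.ofReal (‖y.1 - y.2‖ ^ (2:ℕ)) ∂P ≤ ENNReal.ofReal D),
    klDiv P ((Measure.map Prod.fst P).prod (Measure.map Prod.snd P))

/-!
`h_ν` is decreasing on `(0,1)`, so the supremum is attained where `δ` is smallest, and by AM-GM
`r² + (R² - D) ≥ 2r√(R² - D)`, i.e. `δ(r) ≥ √(1 - D/R²)` with equality at `r = √(R² - D)`.

`h_ν` decreases because `f_ν` increases while `ξ_ν' = -t f_ν'`. For the monotonicity of `f_ν`,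
`t I_{ν-1}² f_ν' = W := t (I_{ν-1}² - I_ν²) - (2ν-1) I_{ν-1} I_ν`, where
`W' = (2ν-1) I_{ν-1} I_ν / t ≥ 0` and `W > 0` near `0`. The derivative and recurrence formulas
for `I_μ` come from `I_μ(t) = (t/2)^μ g_μ((t/2)²)` with the entire series
`g_μ(x) = ∑ x^m / (m! Γ(m+μ+1))`, which satisfies `g_μ' = g_{μ+1}` and
`g_{μ-1}(x) = x g_{μ+1}(x) + μ g_μ(x)`. Finally `t/(2ν+t) ≤ f_ν(t) ≤ t/(2ν)` shows that `f_ν`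
maps `(0,∞)` onto `(0,1)`, so that `invFunOn` really inverts it there.
-/

variable {μ ν t x : ℝ}

def besselCoeff (μ : ℝ) (m : ℕ) : ℝ := ((m.factorial : ℝ) * Gamma (m + μ + 1))⁻¹

def besselSeries (μ x : ℝ) : ℝ := ∑' m : ℕ, besselCoeff μ m * x ^ m

lemma besselCoeff_pos (hμ : -1 < μ) (m : ℕ) : 0 < besselCoeff μ m := by
  have : (0 : ℝ) ≤ m := m.cast_nonneg
  exact inv_pos.2 (mul_pos (by positivity) (Gamma_pos_of_pos (by linarith)))

lemma besselCoeff_add_one (μ : ℝ) (m : ℕ) :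
    besselCoeff (μ + 1) m = (m + 1) * besselCoeff μ (m + 1) := by
  simp only [besselCoeff, Nat.factorial_succ]
  push_cast
  rw [show (m : ℝ) + 1 + μ + 1 = m + (μ + 1) + 1 by ring, mul_assoc, mul_inv (_ + 1 : ℝ),
    mul_inv_cancel_left₀ (by positivity)]

lemma besselCoeff_sub_one (hμ : 0 < μ) (m : ℕ) :
    besselCoeff (μ - 1) m = (m + μ) * besselCoeff μ m := by
  have hm : (0 : ℝ) < m + μ := by positivity
  simp only [besselCoeff]
  rw [show (m : ℝ) + μ + 1 = (m + μ) + 1 by ring, Gamma_add_one hm.ne',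
    show (m : ℝ) + (μ - 1) + 1 = m + μ by ring]
  field_simp

lemma besselCoeff_eq_mul_succ (hμ : -1 < μ) (m : ℕ) :
    besselCoeff μ m = (m + 1) * (m + μ + 1) * besselCoeff μ (m + 1) := by
  have h := besselCoeff_sub_one (by linarith : 0 < μ + 1) m
  rw [add_sub_cancel_right, besselCoeff_add_one] at h
  rw [h]
  ring

lemma summable_besselSeries (hμ : -1 < μ) (x : ℝ) :
    Summable fun m => besselCoeff μ m * x ^ m := by
  refine .of_norm_bounded_eventually_nat (Real.summable_pow_div_factorial |x|) ?_
  filter_upwards [eventually_ge_atTop 2] with m hm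
  have hm' : (2 : ℝ) ≤ m := by exact_mod_cast hm
  have hΓ : 1 ≤ Gamma (m + μ + 1) := Gamma_two.symm.trans_le <|
    Gamma_strictMonoOn_Ici.monotoneOn (mem_Ici.2 le_rfl) (mem_Ici.2 (by linarith)) (by linarith)
  rw [norm_mul, norm_pow, Real.norm_of_nonneg (besselCoeff_pos hμ m).le, Real.norm_eq_abs,
    div_eq_inv_mul]
  gcongr
  rw [besselCoeff, mul_inv]
  exact mul_le_of_le_one_right (by positivity) (inv_le_one_of_one_le₀ hΓ)

lemma besselSeries_zero (μ : ℝ) : besselSeries μ 0 = (Gamma (μ + 1))⁻¹ := by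
  rw [besselSeries, tsum_eq_single 0 fun m hm => by simp [zero_pow hm]]
  simp [besselCoeff]

lemma besselSeries_pos (hμ : -1 < μ) (hx : 0 ≤ x) : 0 < besselSeries μ x :=
  (summable_besselSeries hμ x).tsum_pos
    (fun m => mul_nonneg (besselCoeff_pos hμ m).le (pow_nonneg hx m)) 0
    (by simpa using besselCoeff_pos hμ 0)

lemma hasDerivAt_besselSeries (hμ : -1 < μ) (x : ℝ) :
    HasDerivAt (besselSeries μ) (besselSeries (μ + 1) x) x := by
  have hshift : ∀ y : ℝ, (fun m : ℕ => besselCoeff μ (m + 1) * ((m + 1 : ℕ) * y ^ (m + 1 - 1))) =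
      fun m => besselCoeff (μ + 1) m * y ^ m := fun y => funext fun m => by
    rw [besselCoeff_add_one, Nat.add_sub_cancel]
    push_cast
    ring
  have hμ' : -1 < μ + 1 := by linarith
  set ρ := |x| + 1
  have hx : x ∈ Metric.ball (0 : ℝ) ρ := by simp [ρ]
  have hderiv := hasDerivAt_tsum_of_isPreconnected
    (g := fun m y => besselCoeff μ m * y ^ m)
    (g' := fun m y => besselCoeff μ m * (m * y ^ (m - 1)))
    (u := fun m => besselCoeff μ m * (m * ρ ^ (m - 1)))
    ?summable Metric.isOpen_ball (convex_ball 0 ρ).isPreconnected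
    (fun m y _ => (hasDerivAt_pow m y).const_mul _) ?bound (Metric.mem_ball_self (by positivity))
    (summable_besselSeries hμ 0) hx
  · refine HasDerivAt.congr_deriv (f := besselSeries μ) hderiv ?_
    rw [tsum_eq_zero_add' (by rw [hshift]; exact summable_besselSeries hμ' x), hshift]
    simp [besselSeries]
  case summable =>
    rw [← summable_nat_add_iff 1, hshift]
    exact summable_besselSeries hμ' ρ
  case bound =>
    intro m y hy
    have hy : |y| ≤ ρ := by simpa using (mem_ball_zero_iff.1 hy).le
    have hc := (besselCoeff_pos hμ m).le
    rw [norm_mul, norm_mul, norm_pow, Real.norm_of_nonneg hc, Real.norm_natCast, Real.norm_eq_abs]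
    gcongr

lemma continuous_besselSeries (hμ : -1 < μ) : Continuous (besselSeries μ) :=
  continuous_iff_continuousAt.2 fun x => (hasDerivAt_besselSeries hμ x).continuousAt

lemma besselSeries_sub_one (hμ : 0 < μ) (x : ℝ) :
    besselSeries (μ - 1) x = x * besselSeries (μ + 1) x + μ * besselSeries μ x := by
  set e : ℕ → ℝ := fun m => m * besselCoeff μ m * x ^ m
  have hshift : (fun m => e (m + 1)) = fun m => x * (besselCoeff (μ + 1) m * x ^ m) := by
    ext m
    simp only [e, besselCoeff_add_one]
    push_cast
    ring
  have he : Summable e := by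
    rw [← summable_nat_add_iff 1, hshift]
    exact (summable_besselSeries (by linarith) x).mul_left x
  have hxe : x * besselSeries (μ + 1) x = ∑' m, e m := by
    rw [he.tsum_eq_zero_add, hshift, besselSeries, tsum_mul_left]
    simp [e]
  rw [hxe, besselSeries, besselSeries, ← tsum_mul_left,
    ← he.tsum_add ((summable_besselSeries (by linarith) x).mul_left μ)]
  congr with m
  rw [besselCoeff_sub_one hμ]
  ring

lemma mul_besselSeries_add_one_le (hμ : 0 ≤ μ) (s : ℝ) :
    s * besselSeries (μ + 1) (s ^ 2) ≤ besselSeries μ (s ^ 2) := by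
  set b : ℕ → ℝ := fun m => besselCoeff μ m * (s ^ 2) ^ m
  have hb : Summable b := summable_besselSeries (by linarith) _
  have hb' : Summable fun m => b (m + 1) := (summable_nat_add_iff 1).2 hb
  -- AM-GM: `2 s (m + 1) ≤ (m + 1) ^ 2 + s ^ 2 ≤ (m + 1) (m + μ + 1) + s ^ 2`
  have hterm (m : ℕ) : s * (besselCoeff (μ + 1) m * (s ^ 2) ^ m) ≤ (b m + b (m + 1)) / 2 := by
    have hc := (besselCoeff_pos (by linarith : -1 < μ) (m + 1)).le
    have hm : (0 : ℝ) ≤ m := m.cast_nonneg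
    simp only [b, besselCoeff_add_one, besselCoeff_eq_mul_succ (by linarith : -1 < μ) m,
      pow_succ (s ^ 2) m]
    have hsm : 0 ≤ (s ^ 2) ^ m := by positivity
    nlinarith [mul_nonneg (mul_nonneg hc hsm) (sq_nonneg (m + 1 - s)),
      mul_nonneg (mul_nonneg hc hsm) (mul_nonneg (by linarith : (0 : ℝ) ≤ m + 1) hμ)]
  calc s * besselSeries (μ + 1) (s ^ 2)
      ≤ ∑' m, (b m + b (m + 1)) / 2 := by
        rw [besselSeries, ← tsum_mul_left]
        exact ((summable_besselSeries (by linarith) _).mul_left s).tsum_le_tsum hterm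
          ((hb.add hb').div_const 2)
    _ = (2 * ∑' m, b m - b 0) / 2 := by
        rw [tsum_div_const, hb.tsum_add hb', hb.tsum_eq_zero_add]
        ring
    _ ≤ besselSeries μ (s ^ 2) := by
        have : 0 ≤ b 0 := by simp [b, (besselCoeff_pos (by linarith : -1 < μ) 0).le]
        rw [besselSeries]
        linarith

lemma besselI_eq (μ : ℝ) (ht : 0 < t) :
    besselI μ t = (t / 2) ^ μ * besselSeries μ ((t / 2) ^ 2) := by
  rw [besselI, besselSeries, ← tsum_mul_left]
  congr with m
  rw [rpow_add (by positivity), show 2 * (m : ℝ) = (2 * m : ℕ) by push_cast; ring,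
    rpow_natCast, pow_mul, besselCoeff, div_eq_mul_inv]
  ring

lemma besselI_pos (hμ : -1 < μ) (ht : 0 < t) : 0 < besselI μ t := by
  rw [besselI_eq μ ht]
  exact mul_pos (by positivity) (besselSeries_pos hμ (by positivity))

lemma hasDerivAt_besselI (hμ : -1 < μ) (ht : 0 < t) :
    HasDerivAt (besselI μ) (besselI (μ + 1) t + μ / t * besselI μ t) t := by
  have hhalf : HasDerivAt (fun t : ℝ => t / 2) (1 / 2) t := (hasDerivAt_id t).div_const 2
  have h := (hhalf.rpow_const (p := μ) (Or.inl (by positivity))).mul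
    ((hasDerivAt_besselSeries hμ _).comp t (hhalf.pow 2))
  refine (h.congr_of_eventuallyEq ?_).congr_deriv ?_
  · filter_upwards [Ioi_mem_nhds ht] with s hs using besselI_eq μ hs
  · rw [besselI_eq _ ht, besselI_eq _ ht, rpow_add_one (by positivity),
      rpow_sub_one (by positivity)]
    simp only [Function.comp_apply, Pi.pow_apply]
    field_simp
    ring

lemma besselI_sub_one (hμ : 0 < μ) (ht : 0 < t) :
    besselI (μ - 1) t = besselI (μ + 1) t + 2 * μ / t * besselI μ t := by
  rw [besselI_eq _ ht, besselI_eq _ ht, besselI_eq _ ht, besselSeries_sub_one hμ,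
    rpow_add_one (by positivity), rpow_sub_one (by positivity)]
  field_simp

lemma hasDerivAt_besselI' (hμ : 0 < μ) (ht : 0 < t) :
    HasDerivAt (besselI μ) (besselI (μ - 1) t - μ / t * besselI μ t) t := by
  refine (hasDerivAt_besselI (by linarith) ht).congr_deriv ?_
  rw [besselI_sub_one hμ ht]
  ring

lemma besselI_add_one_le (hμ : 0 ≤ μ) (ht : 0 < t) : besselI (μ + 1) t ≤ besselI μ t := by
  rw [besselI_eq _ ht, besselI_eq _ ht, rpow_add_one (by positivity), mul_assoc]
  gcongr
  exact mul_besselSeries_add_one_le hμ _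

lemma besselRatio_le (hν : 0 < ν) (ht : 0 < t) : besselRatio ν t ≤ t / (2 * ν) := by
  have hC := (besselI_pos (μ := ν + 1) (by linarith) ht).le
  have h2ν : t * (2 * ν / t * besselI ν t) = 2 * ν * besselI ν t := by field_simp
  rw [besselRatio, div_le_div_iff₀ (besselI_pos (by linarith) ht) (by positivity),
    besselI_sub_one hν ht]
  nlinarith

lemma div_le_besselRatio (hν : 0 < ν) (ht : 0 < t) : t / (2 * ν + t) ≤ besselRatio ν t := by
  have hC := besselI_add_one_le hν.le ht
  have h2ν : t * (2 * ν / t * besselI ν t) = 2 * ν * besselI ν t := by field_simp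
  rw [besselRatio, div_le_div_iff₀ (by positivity) (besselI_pos (by linarith) ht),
    besselI_sub_one hν ht]
  nlinarith

def besselRatioDerivNum (ν t : ℝ) : ℝ :=
  t * (besselI (ν - 1) t ^ 2 - besselI ν t ^ 2) - (2 * ν - 1) * (besselI (ν - 1) t * besselI ν t)

lemma hasDerivAt_besselI_sub_one (hν : 0 < ν) (ht : 0 < t) :
    HasDerivAt (besselI (ν - 1)) (besselI ν t + (ν - 1) / t * besselI (ν - 1) t) t := by
  simpa using hasDerivAt_besselI (μ := ν - 1) (by linarith) ht

lemma hasDerivAt_besselRatio (hν : 0 < ν) (ht : 0 < t) :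
    HasDerivAt (besselRatio ν) (besselRatioDerivNum ν t / (t * besselI (ν - 1) t ^ 2)) t := by
  have hA := (besselI_pos (μ := ν - 1) (by linarith) ht).ne'
  refine ((hasDerivAt_besselI' hν ht).div (hasDerivAt_besselI_sub_one hν ht) hA).congr_deriv ?_
  rw [besselRatioDerivNum]
  field_simp
  ring

lemma hasDerivAt_besselRatioDerivNum (hν : 0 < ν) (ht : 0 < t) :
    HasDerivAt (besselRatioDerivNum ν)
      ((2 * ν - 1) * (besselI (ν - 1) t * besselI ν t) / t) t := by
  have hA := hasDerivAt_besselI_sub_one hν ht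
  have hB := hasDerivAt_besselI' hν ht
  refine (((hasDerivAt_id t).mul ((hA.pow 2).sub (hB.pow 2))).sub
    ((hA.mul hB).const_mul (2 * ν - 1))).congr_deriv ?_
  simp only [id, Pi.sub_apply, Pi.pow_apply]
  field_simp
  ring

lemma eventually_pos_besselRatioDerivNum (hν : 0 < ν) :
    ∀ᶠ t in 𝓝[>] 0, 0 < besselRatioDerivNum ν t := by
  -- `besselRatioDerivNum ν t = (t / 2) ^ (2 ν - 1) φ((t / 2) ^ 2)` with `φ(0) = 1 / (ν Γ(ν) ^ 2)`
  set φ : ℝ → ℝ := fun x => 2 * besselSeries (ν - 1) x ^ 2 - 2 * x * besselSeries ν x ^ 2 -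
    (2 * ν - 1) * (besselSeries (ν - 1) x * besselSeries ν x)
  have hφ : Continuous φ := by
    have := continuous_besselSeries (μ := ν - 1) (by linarith)
    have := continuous_besselSeries (μ := ν) (by linarith)
    fun_prop
  have hφ0 : 0 < φ 0 := by
    have hΓ := Gamma_pos_of_pos hν
    simp only [φ, besselSeries_zero, sub_add_cancel, Gamma_add_one hν.ne']
    field_simp
    ring_nf
    positivity
  have hnum {t : ℝ} (ht : 0 < t) :
      besselRatioDerivNum ν t = (t / 2) ^ (2 * ν - 1) * φ ((t / 2) ^ 2) := by
    have hu : 0 < t / 2 := by positivity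
    have hν' : (t / 2) ^ ν = (t / 2) ^ (ν - 1) * (t / 2) := by
      rw [← rpow_add_one hu.ne', sub_add_cancel]
    have h2ν : (t / 2) ^ (2 * ν - 1) = (t / 2) ^ (ν - 1) * (t / 2) ^ (ν - 1) * (t / 2) := by
      rw [← rpow_add hu, ← rpow_add_one hu.ne']
      ring_nf
    rw [besselRatioDerivNum, besselI_eq _ ht, besselI_eq _ ht, hν', h2ν]
    ring
  have hnear : ∀ᶠ t in 𝓝 0, 0 < φ ((t / 2) ^ 2) :=
    continuousAt_const.eventually_lt
      (hφ.comp (by fun_prop : Continuous fun t : ℝ => (t / 2) ^ 2)).continuousAt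
      (by simpa using hφ0)
  filter_upwards [nhdsWithin_le_nhds hnear, self_mem_nhdsWithin] with t hφt ht
  rw [hnum ht]
  exact mul_pos (rpow_pos_of_pos (by linarith [mem_Ioi.1 ht]) _) hφt

lemma besselRatioDerivNum_pos (hν : 1 / 2 ≤ ν) (ht : 0 < t) : 0 < besselRatioDerivNum ν t := by
  have hν0 : 0 < ν := by linarith
  have hmono : MonotoneOn (besselRatioDerivNum ν) (Ioi 0) := by
    refine monotoneOn_of_hasDerivWithinAt_nonneg (convex_Ioi 0)
      (fun s hs => (hasDerivAt_besselRatioDerivNum hν0 hs).continuousAt.continuousWithinAt)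
      (by simpa using fun s hs => (hasDerivAt_besselRatioDerivNum hν0 hs).hasDerivWithinAt) ?_
    simp only [interior_Ioi, mem_Ioi]
    intro s hs
    have := besselI_pos (μ := ν - 1) (by linarith) hs
    have := besselI_pos (μ := ν) (by linarith) hs
    exact div_nonneg (mul_nonneg (by linarith) (by positivity)) hs.le
  obtain ⟨s, hs, hst⟩ := ((eventually_pos_besselRatioDerivNum hν0).and (Ioo_mem_nhdsGT ht)).exists
  exact hs.trans_le (hmono hst.1 ht hst.2.le)

lemma besselRatio_strictMonoOn (hν : 1 / 2 ≤ ν) : StrictMonoOn (besselRatio ν) (Ioi 0) := by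
  have hν0 : 0 < ν := by linarith
  refine strictMonoOn_of_hasDerivWithinAt_pos (convex_Ioi 0)
    (fun s hs => (hasDerivAt_besselRatio hν0 hs).continuousAt.continuousWithinAt)
    (by simpa using fun s hs => (hasDerivAt_besselRatio hν0 hs).hasDerivWithinAt) ?_
  simp only [interior_Ioi, mem_Ioi]
  intro s hs
  have := besselI_pos (μ := ν - 1) (by linarith) hs
  exact div_pos (besselRatioDerivNum_pos hν hs) (by positivity)

lemma Ioo_subset_image_besselRatio (hν : 0 < ν) : Ioo 0 1 ⊆ besselRatio ν '' Ioi 0 := by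
  rintro s ⟨hs0, hs1⟩
  -- `f_ν(a) ≤ s / 2` and `f_ν(b) ≥ 1 / (2 - s) ≥ s` by the bounds above
  set a := ν * s
  set b := 2 * ν / (1 - s)
  have ha : 0 < a := by positivity
  have hb : b * (1 - s) = 2 * ν := div_mul_cancel₀ _ (by linarith)
  have hab : a ≤ b := by
    rw [le_div_iff₀ (by linarith)]
    nlinarith
  have hfa : besselRatio ν a ≤ s := (besselRatio_le hν ha).trans <| by
    rw [div_le_iff₀ (by positivity)]
    nlinarith
  have hfb : s ≤ besselRatio ν b := le_trans (by
    rw [le_div_iff₀ (by positivity)]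
    nlinarith) (div_le_besselRatio hν (ha.trans_le hab))
  have hcont : ContinuousOn (besselRatio ν) (Icc a b) := fun u hu =>
    (hasDerivAt_besselRatio hν (ha.trans_le hu.1)).continuousAt.continuousWithinAt
  obtain ⟨u, hu, hus⟩ := intermediate_value_Icc hab hcont ⟨hfa, hfb⟩
  exact ⟨u, ha.trans_le hu.1, hus⟩

lemma hasDerivAt_xiFun (hν : 0 < ν) (ht : 0 < t) :
    HasDerivAt (xiFun ν) (-t * (besselRatioDerivNum ν t / (t * besselI (ν - 1) t ^ 2))) t := by
  have hA := besselI_pos (μ := ν - 1) (by linarith) ht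
  have htν := (rpow_pos_of_pos ht (ν - 1)).ne'
  have hlog := (((hasDerivAt_besselI_sub_one hν ht).const_mul ((2 * π) ^ ν)).div
    (hasDerivAt_rpow_const (p := ν - 1) (Or.inl ht.ne')) htν).log
    (div_pos (mul_pos (by positivity) hA) (rpow_pos_of_pos ht _)).ne'
  refine ((hasDerivAt_neg t).mul (hasDerivAt_besselRatio hν ht) |>.add hlog).congr_deriv ?_
  simp only [Pi.div_apply]
  rw [rpow_sub_one ht.ne' (ν - 1), besselRatio]
  field_simp
  ring

lemma xiFun_antitoneOn (hν : 1 / 2 ≤ ν) : AntitoneOn (xiFun ν) (Ioi 0) := by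
  have hν0 : 0 < ν := by linarith
  refine antitoneOn_of_hasDerivWithinAt_nonpos (convex_Ioi 0)
    (fun s hs => (hasDerivAt_xiFun hν0 hs).continuousAt.continuousWithinAt)
    (by simpa using fun s hs => (hasDerivAt_xiFun hν0 hs).hasDerivWithinAt) ?_
  simp only [interior_Ioi, mem_Ioi]
  intro s hs
  have := besselI_pos (μ := ν - 1) (by linarith) hs
  have hq : 0 < besselRatioDerivNum ν s / (s * besselI (ν - 1) s ^ 2) :=
    div_pos (besselRatioDerivNum_pos hν hs) (by positivity)
  nlinarith

lemma AntitoneOn.comp_invFunOn {α β γ : Type*} [LinearOrder α] [Nonempty α] [Preorder β]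
    [Preorder γ] {f : α → β} {g : α → γ} {s : Set α} (hg : AntitoneOn g s)
    (hf : StrictMonoOn f s) : AntitoneOn (g ∘ Function.invFunOn f s) (f '' s) := by
  rintro _ ⟨a, ha, rfl⟩ _ ⟨b, hb, rfl⟩ hab
  have hinv := hf.injOn.leftInvOn_invFunOn
  simp only [Function.comp_apply, hinv ha, hinv hb]
  exact hg ha hb ((hf.le_iff_le ha hb).1 hab)

lemma hFun_antitoneOn (hν : 1 / 2 ≤ ν) : AntitoneOn (hFun ν) (Ioo 0 1) :=
  ((xiFun_antitoneOn hν).comp_invFunOn (besselRatio_strictMonoOn hν)).mono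
    (Ioo_subset_image_besselRatio (by linarith))

section Radius

variable {R D r : ℝ}

lemma sq_add_sq_sub_div_mem_Ioo (hR : 0 < R) (hDR : D < R ^ 2)
    (hr : r ∈ Ioo (R - √D) (R + √D)) : (r ^ 2 + R ^ 2 - D) / (2 * r * R) ∈ Ioo (0 : ℝ) 1 := by
  obtain ⟨hr₁, hr₂⟩ := hr
  have hsD : √D < R := (sqrt_lt' hR).2 hDR
  have hr₀ : 0 < r := by linarith
  have hrR : (r - R) ^ 2 < D := calc
    (r - R) ^ 2 < √D ^ 2 := sq_lt_sq' (by linarith) (by linarith)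
    _ = D := sq_sqrt (sqrt_pos.1 (by linarith)).le
  constructor
  · exact div_pos (by nlinarith) (by positivity)
  · rw [div_lt_one (by positivity)]
    nlinarith

lemma sqrt_one_sub_div_sq (hR : 0 < R) : √(1 - D / R ^ 2) = √(R ^ 2 - D) / R := by
  rw [show 1 - D / R ^ 2 = (R ^ 2 - D) / R ^ 2 by field_simp, sqrt_div' _ (sq_nonneg R),
    sqrt_sq hR.le]

lemma sqrt_one_sub_div_sq_le (hR : 0 < R) (hDR : D ≤ R ^ 2) (hr : 0 < r) :
    √(1 - D / R ^ 2) ≤ (r ^ 2 + R ^ 2 - D) / (2 * r * R) := by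
  rw [sqrt_one_sub_div_sq hR, div_le_div_iff₀ hR (by positivity)]
  have := two_mul_le_add_sq r √(R ^ 2 - D)
  rw [sq_sqrt (by linarith)] at this
  nlinarith

lemma sq_add_sq_sub_div_sqrt (hR : 0 < R) (hDR : D < R ^ 2) :
    (√(R ^ 2 - D) ^ 2 + R ^ 2 - D) / (2 * √(R ^ 2 - D) * R) = √(1 - D / R ^ 2) := by
  have h₀ : 0 < √(R ^ 2 - D) := sqrt_pos.2 (by linarith)
  rw [sqrt_one_sub_div_sq hR, sq_sqrt (by linarith)]
  field_simp
  rw [sq_sqrt (by linarith)]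
  ring

lemma sqrt_sq_sub_mem_Ioo (hR : 0 < R) (hD : 0 < D) (hDR : D < R ^ 2) :
    √(R ^ 2 - D) ∈ Ioo (R - √D) (R + √D) := by
  have hsD : √D < R := (sqrt_lt' hR).2 hDR
  have hsD₀ : 0 < √D := sqrt_pos.2 hD
  have hD' := sq_sqrt hD.le
  constructor
  · rw [lt_sqrt (by linarith)]
    nlinarith
  · rw [sqrt_lt' (by linarith)]
    nlinarith

end Radius

/-- **Lemma (optimization over the reconstruction radius).** For `n ≥ 1`, `R > 0` and
`0 < D < R²`, with `δ(r) = (r² + R² - D)/(2rR)`: `δ(r) ∈ (0,1)` on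
`(R - √D, R + √D)`, and `sup_{r ∈ (R-√D, R+√D)} h_{n/2}(δ(r)) = h_{n/2}(√(1 - D/R²))`,
attained at `r = √(R² - D)`, where `δ(√(R² - D)) = √(1 - D/R²)`. -/
theorem sup_hFun_delta (n : ℕ) (hn : 1 ≤ n) (R D : ℝ) (hR : 0 < R) (hD : 0 < D)
    (hDR : D < R ^ 2) :
    (∀ r ∈ Set.Ioo (R - Real.sqrt D) (R + Real.sqrt D),
        (r ^ 2 + R ^ 2 - D) / (2 * r * R) ∈ Set.Ioo (0:ℝ) 1) ∧
      Real.sqrt (R ^ 2 - D) ∈ Set.Ioo (R - Real.sqrt D) (R + Real.sqrt D) ∧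
      ((Real.sqrt (R ^ 2 - D)) ^ 2 + R ^ 2 - D) / (2 * Real.sqrt (R ^ 2 - D) * R) =
        Real.sqrt (1 - D / R ^ 2) ∧
      IsGreatest
        ((fun r => hFun ((n : ℝ) / 2) ((r ^ 2 + R ^ 2 - D) / (2 * r * R))) ''
          Set.Ioo (R - Real.sqrt D) (R + Real.sqrt D))
        (hFun ((n : ℝ) / 2) (Real.sqrt (1 - D / R ^ 2))) := by
  have hν : (1 : ℝ) / 2 ≤ n / 2 := by
    have : (1 : ℝ) ≤ n := by exact_mod_cast hn
    linarith
  have hδ r (hr : r ∈ Ioo (R - √D) (R + √D)) := sq_add_sq_sub_div_mem_Ioo hR hDR hr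
  have hr₀ := sqrt_sq_sub_mem_Ioo hR hD hDR
  have hδr₀ := sq_add_sq_sub_div_sqrt hR hDR
  refine ⟨hδ, hr₀, hδr₀, ⟨_, hr₀, congrArg _ hδr₀⟩, ?_⟩
  rintro _ ⟨r, hr, rfl⟩
  have hr_pos : 0 < r := by linarith [hr.1, (sqrt_lt' hR).2 hDR]
  exact hFun_antitoneOn hν (hδr₀ ▸ hδ _ hr₀) (hδ r hr) (sqrt_one_sub_div_sq_le hR hDR.le hr_pos)
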